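/- For a twice-differentiable proper loss ℓ with conditional Bayes risk L(c) = inf_v E_{Y∼c}[ℓ(Y,v)], the partial losses satisfy ℓ'_{-1}(c)/c = -ℓ'_{1}(c)/(1-c) = -L''(c) for all c ∈ (0,1). -/

import Mathlib

/-! Properness says that `v ↦ π ℓ₁(v) + (1 - π) ℓ₋₁(v)` is minimised at `v = π`, so for interior
`π` its derivative vanishes there: `π ℓ₁'(π) + (1 - π) ℓ₋₁'(π) = 0`. This gives the first
equality, and it also cancels the derivative terms in `L'(π) = ℓ₁(π) - ℓ₋₁(π) + π ℓ₁'(π) +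
(1 - π) ℓ₋₁'(π)`. Hence `L' = ℓ₁ - ℓ₋₁` on `(0, 1)`, and `L'' = ℓ₁' - ℓ₋₁'`, which the
stationarity equation turns into `-ℓ₋₁'(c) / c`. -/

open Set Filter Topology

section

def bayesRisk (ℓ1 ℓm1 : ℝ → ℝ) (π : ℝ) : ℝ := π * ℓ1 π + (1 - π) * ℓm1 π

variable {ℓ1 ℓm1 : ℝ → ℝ}

theorem stationary_of_isMinOn {c : ℝ} (hc : c ∈ Ioo (0 : ℝ) 1)
    (hd1 : DifferentiableAt ℝ ℓ1 c) (hdm : DifferentiableAt ℝ ℓm1 c)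
    (hmin : IsMinOn (fun v => c * ℓ1 v + (1 - c) * ℓm1 v) (Icc 0 1) c) :
    c * deriv ℓ1 c + (1 - c) * deriv ℓm1 c = 0 := by
  have hderiv : HasDerivAt (fun v => c * ℓ1 v + (1 - c) * ℓm1 v)
      (c * deriv ℓ1 c + (1 - c) * deriv ℓm1 c) c :=
    (hd1.hasDerivAt.const_mul c).add (hdm.hasDerivAt.const_mul (1 - c))
  exact (hmin.isLocalMin (Icc_mem_nhds hc.1 hc.2)).hasDerivAt_eq_zero hderiv

theorem hasDerivAt_bayesRisk {x : ℝ}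
    (hd1 : DifferentiableAt ℝ ℓ1 x) (hdm : DifferentiableAt ℝ ℓm1 x) :
    HasDerivAt (bayesRisk ℓ1 ℓm1)
      (ℓ1 x - ℓm1 x + (x * deriv ℓ1 x + (1 - x) * deriv ℓm1 x)) x := by
  have h : HasDerivAt (bayesRisk ℓ1 ℓm1)
      (1 * ℓ1 x + x * deriv ℓ1 x + ((0 - 1) * ℓm1 x + (1 - x) * deriv ℓm1 x)) x :=
    ((hasDerivAt_id x).mul hd1.hasDerivAt).add
      (((hasDerivAt_const x (1 : ℝ)).sub (hasDerivAt_id x)).mul hdm.hasDerivAt)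
  exact h.congr_deriv (by ring)

theorem deriv_bayesRisk_eqOn_sub (hd1 : Differentiable ℝ ℓ1) (hdm : Differentiable ℝ ℓm1)
    (proper : ∀ π ∈ Ioo (0 : ℝ) 1, IsMinOn (fun v => π * ℓ1 v + (1 - π) * ℓm1 v) (Icc 0 1) π) :
    EqOn (deriv (bayesRisk ℓ1 ℓm1)) (ℓ1 - ℓm1) (Ioo 0 1) := by
  intro x hx
  rw [(hasDerivAt_bayesRisk (hd1 x) (hdm x)).deriv,
    stationary_of_isMinOn hx (hd1 x) (hdm x) (proper x hx), add_zero, Pi.sub_apply]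

theorem deriv_deriv_bayesRisk (hd1 : Differentiable ℝ ℓ1) (hdm : Differentiable ℝ ℓm1)
    (proper : ∀ π ∈ Ioo (0 : ℝ) 1, IsMinOn (fun v => π * ℓ1 v + (1 - π) * ℓm1 v) (Icc 0 1) π)
    {c : ℝ} (hc : c ∈ Ioo (0 : ℝ) 1) :
    deriv (deriv (bayesRisk ℓ1 ℓm1)) c = deriv ℓ1 c - deriv ℓm1 c := by
  have hL : deriv (bayesRisk ℓ1 ℓm1) =ᶠ[𝓝 c] ℓ1 - ℓm1 :=
    eventually_of_mem (isOpen_Ioo.mem_nhds hc) (deriv_bayesRisk_eqOn_sub hd1 hdm proper)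
  rw [hL.deriv_eq]
  exact deriv_sub (hd1 c) (hdm c)

end

/-- For a twice-differentiable proper loss ℓ with conditional Bayes risk
L(c) = inf_v E_{Y∼c}[ℓ(Y,v)], the partial losses satisfy
ℓ'_{-1}(c)/c = -ℓ'_{1}(c)/(1-c) = -L''(c) for all c ∈ (0,1). -/
theorem stmt_0
    (ℓ1 ℓm1 : ℝ → ℝ)
    (h1 : ContDiff ℝ 2 ℓ1) (h2 : ContDiff ℝ 2 ℓm1)
    (L : ℝ → ℝ) (hL : ∀ π : ℝ, L π = π * ℓ1 π + (1 - π) * ℓm1 π)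
    (proper : ∀ π ∈ Set.Icc (0:ℝ) 1, ∀ c ∈ Set.Icc (0:ℝ) 1,
      π * ℓ1 π + (1 - π) * ℓm1 π ≤ π * ℓ1 c + (1 - π) * ℓm1 c) :
    ∀ c ∈ Set.Ioo (0:ℝ) 1,
      deriv ℓm1 c / c = -(deriv ℓ1 c) / (1 - c) ∧
      deriv ℓm1 c / c = -(deriv (deriv L) c) := by
  intro c hc
  have hd1 : Differentiable ℝ ℓ1 := h1.differentiable (by norm_num)
  have hdm : Differentiable ℝ ℓm1 := h2.differentiable (by norm_num)
  have hmin : ∀ π ∈ Ioo (0 : ℝ) 1,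
      IsMinOn (fun v => π * ℓ1 v + (1 - π) * ℓm1 v) (Icc 0 1) π :=
    fun π hπ v hv => proper π (Ioo_subset_Icc_self hπ) v hv
  have hstat := stationary_of_isMinOn hc (hd1 c) (hdm c) (hmin c hc)
  have hL'' : deriv (deriv L) c = deriv ℓ1 c - deriv ℓm1 c := by
    rw [show L = bayesRisk ℓ1 ℓm1 from funext hL]
    exact deriv_deriv_bayesRisk hd1 hdm hmin hc
  have hc0 : c ≠ 0 := hc.1.ne'
  have hc1 : 1 - c ≠ 0 := sub_ne_zero.mpr hc.2.ne'
  rw [hL'']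
  constructor <;> field_simp <;> linarith
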